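/- Let G^{Init} be a rooted binary tree and 𝒢 a set of pairwise separated subtrees covering all leaves. Let x be a node of G^{Init} such that both child subtrees G^{Init}[x_l] and G^{Init}[x_r] each contain at least two trees of 𝒢. Then in any triplet-respecting supertree G^{TR} for 𝒢, the node y with L(y) = L(x) induces exactly the bipartition (L(x_l), L(x_r)): that is, {L(y_l), L(y_r)} = {L(x_l), L(x_r)}. -/

import Mathlib

inductive BTree (α : Type) where
  | leaf : α → BTree α
  | node : BTree α → BTree α → BTree α
deriving DecidableEq

namespace BTree

variable {α : Type} [DecidableEq α] {σ : Type} [DecidableEq σ] {γ : Type} [DecidableEq γ]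

/-- leaf (label) set of a tree -/
def leaves : BTree α → Finset α
  | leaf a => {a}
  | node l r => leaves l ∪ leaves r

/-- the leaf labels are pairwise distinct -/
def nodupLeaves : BTree α → Prop
  | leaf _ => True
  | node l r => nodupLeaves l ∧ nodupLeaves r ∧ Disjoint (leaves l) (leaves r)

/-- the (unordered) bipartition `(Ll, Lr)` is compatible with the tree:
the whole leaf set lies in one part, or the leaf sets of the two root child
subtrees lie in opposite parts. -/
def compatible : BTree α → Finset α → Finset α → Prop
  | leaf a, Ll, Lr => a ∈ Ll ∨ a ∈ Lr
  | node l r, Ll, Lr =>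
      leaves l ∪ leaves r ⊆ Ll ∨ leaves l ∪ leaves r ⊆ Lr ∨
      (leaves l ⊆ Ll ∧ leaves r ⊆ Lr) ∨ (leaves l ⊆ Lr ∧ leaves r ⊆ Ll)

/-- union of the leaf sets of a list of trees -/
def unionLeaves (Gs : List (BTree α)) : Finset α :=
  Gs.foldr (fun g acc => leaves g ∪ acc) ∅

/-- `(Ll, Lr)` is a bipartition of the union of the leaf sets (both parts
nonempty) compatible with every tree in the list. -/
def isCompBip (Gs : List (BTree α)) (Ll Lr : Finset α) : Prop :=
  Ll ∪ Lr = unionLeaves Gs ∧ Disjoint Ll Lr ∧ Ll.Nonempty ∧ Lr.Nonempty ∧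
    ∀ G ∈ Gs, compatible G Ll Lr

/-- restriction `G|_L` : remove the leaves not in `L` and suppress the
resulting degree-2 nodes; `none` if no leaf of `G` lies in `L`. -/
def restrict : BTree α → Finset α → Option (BTree α)
  | leaf a, L => if a ∈ L then some (leaf a) else none
  | node l r, L =>
      match restrict l L, restrict r L with
      | some l', some r' => some (node l' r')
      | some l', none => some l'
      | none, some r' => some r'
      | none, none => none

/-- isomorphism of rooted leaf-labeled trees (children are unordered) -/
inductive Iso : BTree α → BTree α → Prop
  | leaf (a : α) : Iso (leaf a) (leaf a)
  | node {l r l' r' : BTree α} : Iso l l' → Iso r r' → Iso (node l r) (node l' r')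
  | swap {l r l' r' : BTree α} : Iso l r' → Iso r l' → Iso (node l r) (node l' r')

/-- `G` displays `G'` : the restriction of `G` to the leaves of `G'` is
isomorphic to `G'` (preserving leaf labels). -/
def displays (G G' : BTree α) : Prop :=
  ∃ t, restrict G (leaves G') = some t ∧ Iso t G'

/-- `Subtree t T` : `t` is a complete rooted subtree of `T` (i.e. `t = T[x]`
for some node `x` of `T`).  Equivalently, the root of `T` is a (weak)
ancestor of the root of `t`. -/
inductive Subtree : BTree α → BTree α → Prop
  | refl (t : BTree α) : Subtree t t
  | left {t l r : BTree α} : Subtree t l → Subtree t (node l r)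
  | right {t l r : BTree α} : Subtree t r → Subtree t (node l r)

/-- two nodes (complete subtrees) are separated: neither is a (weak)
ancestor of the other -/
def separated (u v : BTree α) : Prop := ¬ Subtree u v ∧ ¬ Subtree v u

/-- the subtree rooted at the lowest common ancestor of the leaf set `L` -/
def lcaSub : BTree α → Finset α → BTree α
  | leaf a, _ => leaf a
  | node l r, L =>
      if L ⊆ leaves l then lcaSub l L
      else if L ⊆ leaves r then lcaSub r L
      else node l r

/-- `T1` and `T2` induce the same rooted triplet topology on `{a, b, c}` -/
def sameTriplet (T1 T2 : BTree α) (a b c : α) : Prop :=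
  ∃ t1 t2, restrict T1 {a, b, c} = some t1 ∧ restrict T2 {a, b, c} = some t2 ∧ Iso t1 t2

/-- `GTR` is triplet respecting w.r.t. `GInit` and the family `Gs` : for any
three leaves taken from three distinct trees of `Gs`, `GInit` and `GTR`
induce the same rooted triplet topology. -/
def tripletRespecting (GInit GTR : BTree α) (Gs : List (BTree α)) : Prop :=
  ∀ G1 ∈ Gs, ∀ G2 ∈ Gs, ∀ G3 ∈ Gs, G1 ≠ G2 → G1 ≠ G3 → G2 ≠ G3 →
    ∀ a ∈ leaves G1, ∀ b ∈ leaves G2, ∀ c ∈ leaves G3, sameTriplet GInit GTR a b c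

/-- at least two (distinct) trees of `Gs` are subtrees of `t` : `|𝒢(t)| ≥ 2` -/
def atLeastTwo (Gs : List (BTree α)) (t : BTree α) : Prop :=
  ∃ Gi ∈ Gs, ∃ Gj ∈ Gs, Gi ≠ Gj ∧ Subtree Gi t ∧ Subtree Gj t

/-- `Graft T' T R` : `R` is obtained from `T` by grafting `T'` at some node
`x*` of `T`, i.e. subdividing the edge above `x*` (or adding a new root if
`x*` is the root) and attaching `T'` as the new sibling of `x*`. -/
inductive Graft (T' : BTree α) : BTree α → BTree α → Prop
  | atRootL (T : BTree α) : Graft T' T (node T' T)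
  | atRootR (T : BTree α) : Graft T' T (node T T')
  | left {l r g : BTree α} : Graft T' l g → Graft T' (node l r) (node g r)
  | right {l r g : BTree α} : Graft T' r g → Graft T' (node l r) (node l g)

/-- number of edges from the root of `u` down to the node `v`, if `v` is a
node (complete subtree) of `u` -/
def edist : BTree σ → BTree σ → Option ℕ
  | leaf a, v => if leaf a = v then some 0 else none
  | node l r, v =>
      if node l r = v then some 0 else
      match edist l v, edist r v with
      | some n, _ => some (n + 1)
      | none, some n => some (n + 1)
      | none, none => none

/-- number of nodes strictly between an ancestor `u` and a descendant `v` -/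
def inter (u v : BTree σ) : ℕ := (edist u v).getD 1 - 1

/-- node (`lca`) of the species tree `S` associated to a set `L` of genes -/
def specOf (S : BTree σ) (s : γ → σ) (L : Finset γ) : BTree σ := lcaSub S (L.image s)

/-- the species-tree node `s(x)` associated with a gene-tree node `x`
(lca of the species of the leaves below `x`) -/
def spec (S : BTree σ) (s : γ → σ) (t : BTree γ) : BTree σ := specOf S s (leaves t)

/-- the local LCA-reconciliation cost of a node whose own mapping is `su`
and whose children map to `sl` and `sr` -/
def localCost (su sl sr : BTree σ) : ℕ :=
  inter su sl + inter su sr +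
    (if su = sl ∧ su = sr then 1 else if su = sl ∨ su = sr then 2 else 0)

/-- number of duplication nodes of the LCA-reconciliation -/
def dupCount (S : BTree σ) (s : γ → σ) : BTree γ → ℕ
  | leaf _ => 0
  | node l r =>
      dupCount S s l + dupCount S s r +
      (if spec S s (node l r) = spec S s l ∨ spec S s (node l r) = spec S s r then 1 else 0)

/-- minimum number of losses of the LCA-reconciliation: for each edge `(x,c)`,
`inter(s(x), s(c))` losses, plus one more loss for each child `c` of a
duplication node `x` with `s(c) ≠ s(x)` -/
def lossCount (S : BTree σ) (s : γ → σ) : BTree γ → ℕ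
  | leaf _ => 0
  | node l r =>
      lossCount S s l + lossCount S s r +
      (if spec S s (node l r) = spec S s l ∨ spec S s (node l r) = spec S s r then
        (inter (spec S s (node l r)) (spec S s l) +
          if spec S s l = spec S s (node l r) then 0 else 1) +
        (inter (spec S s (node l r)) (spec S s r) +
          if spec S s r = spec S s (node l r) then 0 else 1)
      else
        inter (spec S s (node l r)) (spec S s l) + inter (spec S s (node l r)) (spec S s r))

/-- sum over all internal nodes of the local LCA-reconciliation costs -/
def totalLocal (S : BTree σ) (s : γ → σ) : BTree γ → ℕ
  | leaf _ => 0
  | node l r =>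
      totalLocal S s l + totalLocal S s r +
      localCost (spec S s (node l r)) (spec S s l) (spec S s r)

/-- `G` is a supertree for `Gs` : a tree on the union of the leaf sets
(each leaf once) displaying every tree of `Gs` -/
def isSupertree (Gs : List (BTree γ)) (G : BTree γ) : Prop :=
  leaves G = unionLeaves Gs ∧ nodupLeaves G ∧ ∀ Gi ∈ Gs, displays G Gi

/-- `MinSGT` : minimum LCA-reconciliation cost over all supertrees -/
noncomputable def reconMin (S : BTree σ) (s : γ → σ) (Gs : List (BTree γ)) : ℕ :=
  sInf {c | ∃ G : BTree γ, isSupertree Gs G ∧ totalLocal S s G = c}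

/-- restrictions `G_i|_L` of the trees of the list (dropping empty ones) -/
def restrictList (Gs : List (BTree γ)) (L : Finset γ) : List (BTree γ) :=
  Gs.filterMap fun G => restrict G L

/-- the four possible ordered choices for distributing a tree into the two
parts of a bipartition: whole tree left, whole tree right, left subtree
left & right subtree right, left subtree right & right subtree left -/
def pick : BTree α → ℕ → Finset α × Finset α
  | G, 0 => (leaves G, ∅)
  | G, 1 => (∅, leaves G)
  | node l r, 2 => (leaves l, leaves r)
  | node l r, _ => (leaves r, leaves l)
  | G, _ => (∅, leaves G)

/-- left part produced by a distribution `f` of choices -/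
def partsLeft (Gs : List (BTree α)) (f : Fin Gs.length → Fin 4) : Finset α :=
  Finset.univ.biUnion fun i => (pick (Gs.get i) (f i).val).1

/-- right part produced by a distribution `f` of choices -/
def partsRight (Gs : List (BTree α)) (f : Fin Gs.length → Fin 4) : Finset α :=
  Finset.univ.biUnion fun i => (pick (Gs.get i) (f i).val).2

/-- the complete subtree at a position (path from the root) -/
def subtreeAt : BTree α → List Bool → Option (BTree α)
  | t, [] => some t
  | leaf _, _ :: _ => none
  | node l _, false :: p => subtreeAt l p
  | node _ r, true :: p => subtreeAt r p

/-- the set of positions of internal nodes -/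
def internalPos : BTree α → Finset (List Bool)
  | leaf _ => ∅
  | node l r =>
      insert [] ((internalPos l).image (List.cons false) ∪
        (internalPos r).image (List.cons true))

end BTree

/-- labeled gene trees: each internal node carries `true` (Dup) or `false` (Spec) -/
inductive LTree (α : Type) where
  | leaf : α → LTree α
  | node : Bool → LTree α → LTree α → LTree α
deriving DecidableEq

namespace LTree

variable {α : Type} [DecidableEq α]

def leaves : LTree α → Finset α
  | leaf a => {a}
  | node _ l r => leaves l ∪ leaves r

/-- underlying unlabeled tree -/
def shape : LTree α → BTree α
  | leaf a => BTree.leaf a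
  | node _ l r => BTree.node (shape l) (shape r)

/-- the event label of the root (`none` for a leaf) -/
def rootEv : LTree α → Option Bool
  | leaf _ => none
  | node e _ _ => some e

inductive Subtree : LTree α → LTree α → Prop
  | refl (t : LTree α) : Subtree t t
  | left {t l r : LTree α} {e : Bool} : Subtree t l → Subtree t (node e l r)
  | right {t l r : LTree α} {e : Bool} : Subtree t r → Subtree t (node e l r)

/-- the subtree rooted at the lowest common ancestor of the leaf set `L` -/
def lcaSub : LTree α → Finset α → LTree α
  | leaf a, _ => leaf a
  | node e l r, L =>
      if L ⊆ leaves l then lcaSub l L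
      else if L ⊆ leaves r then lcaSub r L
      else node e l r

/-- `G` displays `G'` (topologically, ignoring labels) -/
def displaysL (G G' : LTree α) : Prop := BTree.displays (shape G) (shape G')

/-- `(G, ev_G)` is label-compatible with `(G', ev_{G'})` : every internal
node `x'` of `G'` has the same event label as `lca_G(L(x'))` -/
def labelCompatible (G G' : LTree α) : Prop :=
  ∀ (e : Bool) (l r : LTree α), Subtree (node e l r) G' →
    rootEv (lcaSub G (leaves (node e l r))) = some e

end LTree

/-!
Let `y = node yl yr` be the node of `GTR` with the leaf set of `x = node xl xr`. Suppose `y`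
splits two leaves `a`, `b` of `xl` that come from different trees of `𝒢`, and pick a leaf `c`
of a tree of `𝒢` inside `xr`. Restricted to `{a, b, c}`, `GInit` is the triplet `ab|c`, while
the root of the restriction of `GTR` separates `a` from `b`: this contradicts triplet respect.
If `a` and `b` come from the same tree, a leaf of a second tree of `𝒢` inside `xl` yields such
a pair. Hence each of `L(xl)`, `L(xr)` lies in `L(yl)` or in `L(yr)`, and since both pairs
partition `L(x)` the two bipartitions coincide.
-/

theorem Finset.eq_and_eq_or_eq_and_eq_of_union_eq {α : Type} [DecidableEq α]
    {A B C D : Finset α} (h : A ∪ B = C ∪ D) (hAB : Disjoint A B)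
    (hA : A.Nonempty) (hB : B.Nonempty) (hC : C ⊆ A ∨ C ⊆ B) (hD : D ⊆ A ∨ D ⊆ B) :
    A = C ∧ B = D ∨ A = D ∧ B = C := by
  obtain ⟨a, ha⟩ := hA
  obtain ⟨b, hb⟩ := hB
  rw [Finset.disjoint_left] at hAB
  simp only [Finset.ext_iff, Finset.subset_iff, Finset.mem_union] at *
  grind

namespace BTree

theorem atLeastTwo.exists_ne {α : Type} {Gs : List (BTree α)} {x : BTree α}
    (h : atLeastTwo Gs x) (G : BTree α) : ∃ G' ∈ Gs, G' ≠ G ∧ Subtree G' x := by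
  obtain ⟨G₁, hG₁, G₂, hG₂, hne, hx₁, hx₂⟩ := h
  by_cases hG : G₁ = G
  · exact ⟨G₂, hG₂, fun h => hne (hG.trans h.symm), hx₂⟩
  · exact ⟨G₁, hG₁, hG, hx₁⟩

theorem atLeastTwo.exists_subtree {α : Type} {Gs : List (BTree α)} {x : BTree α}
    (h : atLeastTwo Gs x) : ∃ G ∈ Gs, Subtree G x :=
  let ⟨G, hG, _, _, _, hGx, _⟩ := h
  ⟨G, hG, hGx⟩

variable {α : Type} [DecidableEq α]

theorem leaves_nonempty (t : BTree α) : t.leaves.Nonempty := by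
  induction t with
  | leaf a => exact Finset.singleton_nonempty a
  | node l r ihl _ => exact ihl.mono Finset.subset_union_left

theorem exists_eq_node_of_one_lt_card_leaves {t : BTree α} (h : 1 < t.leaves.card) :
    ∃ l r, t = node l r := by
  cases t with
  | leaf a => simp [leaves] at h
  | node l r => exact ⟨l, r, rfl⟩

theorem mem_unionLeaves {Gs : List (BTree α)} {a : α} :
    a ∈ unionLeaves Gs ↔ ∃ G ∈ Gs, a ∈ G.leaves := by
  induction Gs with
  | nil => simp [unionLeaves]
  | cons g gs ih =>
    simp only [unionLeaves, List.foldr_cons, Finset.mem_union, List.mem_cons,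
      exists_eq_or_imp] at ih ⊢
    rw [ih]

theorem Subtree.leaves_subset {u t : BTree α} (h : Subtree u t) : u.leaves ⊆ t.leaves := by
  induction h with
  | refl => exact Finset.Subset.refl _
  | left _ ih => exact ih.trans Finset.subset_union_left
  | right _ ih => exact ih.trans Finset.subset_union_right

theorem Subtree.nodupLeaves {u t : BTree α} (h : Subtree u t) (ht : t.nodupLeaves) :
    u.nodupLeaves := by
  induction h with
  | refl => exact ht
  | left _ ih => exact ih ht.1
  | right _ ih => exact ih ht.2.1

theorem Iso.leaves_eq {t₁ t₂ : BTree α} (h : Iso t₁ t₂) : t₁.leaves = t₂.leaves := by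
  induction h with
  | leaf => rfl
  | node _ _ ih₁ ih₂ => simp only [leaves, ih₁, ih₂]
  | swap _ _ ih₁ ih₂ => simp only [leaves, ih₁, ih₂, Finset.union_comm]

theorem restrict_eq_none_iff (G : BTree α) (L : Finset α) :
    restrict G L = none ↔ Disjoint G.leaves L := by
  induction G with
  | leaf a => by_cases h : a ∈ L <;> simp [restrict, leaves, h]
  | node l r ihl ihr =>
    cases hl : restrict l L <;> cases hr : restrict r L <;>
      simp_all [restrict, leaves, Finset.disjoint_union_left]

theorem leaves_of_restrict_eq_some {G t : BTree α} {L : Finset α}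
    (h : restrict G L = some t) : t.leaves = G.leaves ∩ L := by
  induction G generalizing t with
  | leaf a =>
    by_cases ha : a ∈ L <;> simp only [restrict, ha, ↓reduceIte, reduceCtorEq,
      Option.some.injEq] at h
    simp [← h, leaves, ha]
  | node l r ihl ihr =>
    have hl' := restrict_eq_none_iff l L
    have hr' := restrict_eq_none_iff r L
    rw [Finset.disjoint_iff_inter_eq_empty] at hl' hr'
    cases hl : restrict l L <;> cases hr : restrict r L <;>
      simp only [restrict, hl, hr, reduceCtorEq, Option.some.injEq] at h <;> subst h <;>
      simp_all [leaves, Finset.union_inter_distrib_right]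

theorem restrict_of_subtree {u T : BTree α} (h : Subtree u T) (hT : T.nodupLeaves)
    {L : Finset α} (hL : L ⊆ u.leaves) : restrict T L = restrict u L := by
  induction h with
  | refl => rfl
  | @left l r h ih =>
    have hr : restrict r L = none :=
      (restrict_eq_none_iff r L).2 (hT.2.2.symm.mono_right (hL.trans h.leaves_subset))
    cases hl : restrict l L <;> simp only [restrict, hl, hr] <;> rw [← ih hT.1, hl]
  | @right l r h ih =>
    have hl : restrict l L = none :=
      (restrict_eq_none_iff l L).2 (hT.2.2.mono_right (hL.trans h.leaves_subset))
    cases hr : restrict r L <;> simp only [restrict, hl, hr] <;> rw [← ih hT.2.1, hr]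

theorem restrict_eq_node_of_subtree {P Q T : BTree α} (h : Subtree (node P Q) T)
    (hT : T.nodupLeaves) {L : Finset α} (hL : L ⊆ P.leaves ∪ Q.leaves)
    (hP : (P.leaves ∩ L).Nonempty) (hQ : (Q.leaves ∩ L).Nonempty) :
    ∃ tl tr, restrict T L = some (node tl tr) ∧
      tl.leaves = P.leaves ∩ L ∧ tr.leaves = Q.leaves ∩ L := by
  obtain ⟨tl, htl⟩ := Option.ne_none_iff_exists'.1
    (mt (restrict_eq_none_iff P L).1 (Finset.not_disjoint_iff_nonempty_inter.2 hP))
  obtain ⟨tr, htr⟩ := Option.ne_none_iff_exists'.1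
    (mt (restrict_eq_none_iff Q L).1 (Finset.not_disjoint_iff_nonempty_inter.2 hQ))
  refine ⟨tl, tr, ?_, leaves_of_restrict_eq_some htl, leaves_of_restrict_eq_some htr⟩
  rw [restrict_of_subtree h hT hL]
  simp [restrict, htl, htr]

def SeparatedAtRoot (t : BTree α) (a b : α) : Prop :=
  ∃ l r, t = node l r ∧
    (a ∈ l.leaves ∧ b ∈ r.leaves ∨ a ∈ r.leaves ∧ b ∈ l.leaves)

theorem separatedAtRoot_node_iff {l r : BTree α} {a b : α} :
    SeparatedAtRoot (node l r) a b ↔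
      a ∈ l.leaves ∧ b ∈ r.leaves ∨ a ∈ r.leaves ∧ b ∈ l.leaves := by
  simp [SeparatedAtRoot]

theorem Iso.separatedAtRoot_iff {t₁ t₂ : BTree α} (h : Iso t₁ t₂) {a b : α} :
    SeparatedAtRoot t₁ a b ↔ SeparatedAtRoot t₂ a b := by
  cases h with
  | leaf => rfl
  | node h₁ h₂ => simp only [separatedAtRoot_node_iff, h₁.leaves_eq, h₂.leaves_eq]
  | swap h₁ h₂ => simp only [separatedAtRoot_node_iff, h₁.leaves_eq, h₂.leaves_eq]; tauto

theorem separatedAtRoot_restrict_iff {P Q T : BTree α} (h : Subtree (node P Q) T)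
    (hT : T.nodupLeaves) {L : Finset α} (hL : L ⊆ P.leaves ∪ Q.leaves)
    (hP : (P.leaves ∩ L).Nonempty) (hQ : (Q.leaves ∩ L).Nonempty) {a b : α}
    (ha : a ∈ L) (hb : b ∈ L) :
    ∃ t, restrict T L = some t ∧ (SeparatedAtRoot t a b ↔
      a ∈ P.leaves ∧ b ∈ Q.leaves ∨ a ∈ Q.leaves ∧ b ∈ P.leaves) := by
  obtain ⟨tl, tr, hrestr, htl, htr⟩ := restrict_eq_node_of_subtree h hT hL hP hQ
  refine ⟨_, hrestr, ?_⟩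
  simp [separatedAtRoot_node_iff, htl, htr, ha, hb]

theorem separatedAtRoot_iff_of_sameTriplet {T₁ T₂ t₁ t₂ : BTree α} {a b c : α}
    (h : sameTriplet T₁ T₂ a b c) (h₁ : restrict T₁ {a, b, c} = some t₁)
    (h₂ : restrict T₂ {a, b, c} = some t₂) :
    SeparatedAtRoot t₁ a b ↔ SeparatedAtRoot t₂ a b := by
  obtain ⟨u₁, u₂, hu₁, hu₂, hiso⟩ := h
  rw [hu₁, Option.some.injEq] at h₁
  rw [hu₂, Option.some.injEq] at h₂
  exact h₁ ▸ h₂ ▸ hiso.separatedAtRoot_iff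

theorem disjoint_leaves_of_subtree_node {X Z T : BTree α}
    (h : Subtree (node X Z) T ∨ Subtree (node Z X) T) (hT : T.nodupLeaves) :
    Disjoint X.leaves Z.leaves := by
  rcases h with h | h
  exacts [(h.nodupLeaves hT).2.2, (h.nodupLeaves hT).2.2.symm]

theorem exists_restrict_not_separatedAtRoot {X Z T : BTree α}
    (h : Subtree (node X Z) T ∨ Subtree (node Z X) T) (hT : T.nodupLeaves)
    {L : Finset α} (hL : L ⊆ X.leaves ∪ Z.leaves) {a b c : α} (ha : a ∈ L ∩ X.leaves)
    (hb : b ∈ L ∩ X.leaves) (hc : c ∈ L ∩ Z.leaves) :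
    ∃ t, restrict T L = some t ∧ ¬ SeparatedAtRoot t a b := by
  rw [Finset.mem_inter] at ha hb hc
  have hZ := Finset.disjoint_left.1 (disjoint_leaves_of_subtree_node h hT)
  rcases h with h | h
  · obtain ⟨t, ht, hsep⟩ := separatedAtRoot_restrict_iff h hT hL ⟨a, by simp [ha]⟩
      ⟨c, by simp [hc]⟩ ha.1 hb.1
    exact ⟨t, ht, fun hs => by
      rcases hsep.1 hs with ⟨-, h'⟩ | ⟨h', -⟩
      exacts [hZ hb.2 h', hZ ha.2 h']⟩
  · obtain ⟨t, ht, hsep⟩ := separatedAtRoot_restrict_iff h hT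
      (hL.trans (Finset.union_comm _ _).le) ⟨c, by simp [hc]⟩ ⟨a, by simp [ha]⟩ ha.1 hb.1
    exact ⟨t, ht, fun hs => by
      rcases hsep.1 hs with ⟨h', -⟩ | ⟨-, h'⟩
      exacts [hZ ha.2 h', hZ hb.2 h']⟩

theorem leaves_subset_or_subset_of_forall_not_split {Gs : List (BTree α)} {x : BTree α}
    {Y₁ Y₂ : Finset α} (hxY : x.leaves ⊆ Y₁ ∪ Y₂)
    (hcov : ∀ a ∈ x.leaves, ∃ G ∈ Gs, a ∈ G.leaves) (h2 : atLeastTwo Gs x)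
    (hsplit : ∀ G₁ ∈ Gs, ∀ G₂ ∈ Gs, G₁ ≠ G₂ → ∀ a ∈ G₁.leaves, ∀ b ∈ G₂.leaves,
      a ∈ x.leaves → b ∈ x.leaves → a ∈ Y₁ → b ∉ Y₂) :
    x.leaves ⊆ Y₁ ∨ x.leaves ⊆ Y₂ := by
  by_contra! hcon
  obtain ⟨b, hbx, hbY₁⟩ := Finset.not_subset.1 hcon.1
  obtain ⟨a, hax, haY₂⟩ := Finset.not_subset.1 hcon.2
  have haY₁ : a ∈ Y₁ := (Finset.mem_union.1 (hxY hax)).resolve_right haY₂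
  have hbY₂ : b ∈ Y₂ := (Finset.mem_union.1 (hxY hbx)).resolve_left hbY₁
  obtain ⟨Ga, hGa, ha⟩ := hcov a hax
  obtain ⟨Gb, hGb, hb⟩ := hcov b hbx
  by_cases hab : Ga = Gb
  · subst hab
    obtain ⟨Gq, hGq, hqa, hqx⟩ := h2.exists_ne Ga
    obtain ⟨q, hq⟩ := Gq.leaves_nonempty
    rcases Finset.mem_union.1 (hxY (hqx.leaves_subset hq)) with hqY₁ | hqY₂
    · exact hsplit Gq hGq Ga hGa hqa q hq b hb (hqx.leaves_subset hq) hbx hqY₁ hbY₂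
    · exact hsplit Ga hGa Gq hGq hqa.symm a ha q hq hax (hqx.leaves_subset hq) haY₁ hqY₂
  · exact hsplit Ga hGa Gb hGb hab a ha b hb hax hbx haY₁ hbY₂

theorem leaves_subset_or_subset_of_tripletRespecting {GInit GTR : BTree α}
    {Gs : List (BTree α)} (hndI : GInit.nodupLeaves) (hndT : GTR.nodupLeaves)
    (hcover : GInit.leaves ⊆ unionLeaves Gs) (htrip : tripletRespecting GInit GTR Gs)
    {X Z yl yr : BTree α} (hx : Subtree (node X Z) GInit ∨ Subtree (node Z X) GInit)
    (hy : Subtree (node yl yr) GTR) (hU : yl.leaves ∪ yr.leaves = X.leaves ∪ Z.leaves)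
    (hX : atLeastTwo Gs X) (hZ : ∃ G ∈ Gs, Subtree G Z) :
    X.leaves ⊆ yl.leaves ∨ X.leaves ⊆ yr.leaves := by
  have hXI : X.leaves ⊆ GInit.leaves := by
    rcases hx with h | h
    exacts [Finset.subset_union_left.trans h.leaves_subset,
      Finset.subset_union_right.trans h.leaves_subset]
  refine leaves_subset_or_subset_of_forall_not_split (hU ▸ Finset.subset_union_left)
    (fun a ha => mem_unionLeaves.1 (hcover (hXI ha))) hX ?_
  intro G₁ hG₁ G₂ hG₂ hne a ha b hb haX hbX hayl hbyr
  obtain ⟨Gc, hGc, hGcZ⟩ := hZ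
  obtain ⟨c, hc⟩ := Gc.leaves_nonempty
  have hcZ := hGcZ.leaves_subset hc
  have hXZ := Finset.disjoint_left.1 (disjoint_leaves_of_subtree_node hx hndI)
  have hG₁c : G₁ ≠ Gc := by rintro rfl; exact hXZ haX (hGcZ.leaves_subset ha)
  have hG₂c : G₂ ≠ Gc := by rintro rfl; exact hXZ hbX (hGcZ.leaves_subset hb)
  have hL : ({a, b, c} : Finset α) ⊆ X.leaves ∪ Z.leaves := by
    simp [Finset.insert_subset_iff, haX, hbX, hcZ]
  obtain ⟨t₁, h₁, hsep₁⟩ := exists_restrict_not_separatedAtRoot hx hndI hL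
    (Finset.mem_inter.2 ⟨by simp, haX⟩) (Finset.mem_inter.2 ⟨by simp, hbX⟩)
    (Finset.mem_inter.2 ⟨by simp, hcZ⟩)
  obtain ⟨t₂, h₂, hsep₂⟩ := separatedAtRoot_restrict_iff hy hndT (hU ▸ hL)
    ⟨a, by simp [hayl]⟩ ⟨b, by simp [hbyr]⟩ (a := a) (b := b) (by simp) (by simp)
  have hst := htrip G₁ hG₁ G₂ hG₂ Gc hGc hne hG₁c hG₂c a ha b hb c hc
  exact hsep₁ ((separatedAtRoot_iff_of_sameTriplet hst h₁ h₂).2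
    (hsep₂.2 (Or.inl ⟨hayl, hbyr⟩)))

end BTree

theorem stmt9_general {α : Type} [DecidableEq α] (GInit GTR : BTree α) (Gs : List (BTree α))
    (hndI : GInit.nodupLeaves) (hndT : GTR.nodupLeaves)
    (hcover : BTree.unionLeaves Gs = GInit.leaves)
    (htrip : BTree.tripletRespecting GInit GTR Gs)
    (xl xr : BTree α) (hx : BTree.Subtree (BTree.node xl xr) GInit)
    (h2l : BTree.atLeastTwo Gs xl) (h2r : BTree.atLeastTwo Gs xr) :
    ∀ y, BTree.Subtree y GTR → y.leaves = (BTree.node xl xr).leaves →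
      ∃ yl yr, y = BTree.node yl yr ∧
        ((yl.leaves = xl.leaves ∧ yr.leaves = xr.leaves) ∨
          (yl.leaves = xr.leaves ∧ yr.leaves = xl.leaves)) := by
  intro y hy hyx
  have hxd : Disjoint xl.leaves xr.leaves := (hx.nodupLeaves hndI).2.2
  obtain ⟨yl, yr, rfl⟩ : ∃ yl yr, y = BTree.node yl yr := by
    refine BTree.exists_eq_node_of_one_lt_card_leaves ?_
    rw [hyx, BTree.leaves, Finset.card_union_of_disjoint hxd]
    have := xl.leaves_nonempty.card_pos
    have := xr.leaves_nonempty.card_pos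
    omega
  refine ⟨yl, yr, rfl, ?_⟩
  have hU : yl.leaves ∪ yr.leaves = xl.leaves ∪ xr.leaves := hyx
  have hl := BTree.leaves_subset_or_subset_of_tripletRespecting hndI hndT hcover.ge htrip
    (Or.inl hx) hy hU h2l h2r.exists_subtree
  have hr := BTree.leaves_subset_or_subset_of_tripletRespecting hndI hndT hcover.ge htrip
    (Or.inr hx) hy (hU.trans (Finset.union_comm _ _)) h2r
    h2l.exists_subtree
  exact Finset.eq_and_eq_or_eq_and_eq_of_union_eq hU (hy.nodupLeaves hndT).2.2
    yl.leaves_nonempty yr.leaves_nonempty hl hr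

/-- if both child subtrees of `x` contain at least two trees of
`𝒢`, then in any triplet-respecting supertree the node `y` with
`L(y) = L(x)` induces exactly the bipartition `(L(x_l), L(x_r))`. -/
theorem stmt9 {α : Type} [DecidableEq α] (GInit GTR : BTree α) (Gs : List (BTree α))
    (hndI : GInit.nodupLeaves) (hndT : GTR.nodupLeaves)
    (hsub : ∀ Gi ∈ Gs, BTree.Subtree Gi GInit)
    (hdisj : Gs.Pairwise fun a b => Disjoint a.leaves b.leaves)
    (hcover : BTree.unionLeaves Gs = GInit.leaves)
    (hleaves : GTR.leaves = GInit.leaves)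
    (hdisp : ∀ Gi ∈ Gs, GTR.displays Gi)
    (htrip : BTree.tripletRespecting GInit GTR Gs)
    (xl xr : BTree α) (hx : BTree.Subtree (BTree.node xl xr) GInit)
    (h2l : BTree.atLeastTwo Gs xl) (h2r : BTree.atLeastTwo Gs xr) :
    ∀ y, BTree.Subtree y GTR → y.leaves = (BTree.node xl xr).leaves →
      ∃ yl yr, y = BTree.node yl yr ∧
        ((yl.leaves = xl.leaves ∧ yr.leaves = xr.leaves) ∨
          (yl.leaves = xr.leaves ∧ yr.leaves = xl.leaves)) :=
  stmt9_general GInit GTR Gs hndI hndT hcover htrip xl xr hx h2l h2r
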